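/- Every skew PBW extension A of a ring R with variables x_1, …, x_n is a finitely semi-graded ring. Explicitly, setting A_p := ⊕_{|α| = p} R x^α (the free left R-submodule spanned by the standard monomials of total degree p), one has: A = ⊕_{p≥0} A_p as an internal direct sum of additive subgroups; 1 ∈ A_0 = R; A_m · A_n ⊆ A_0 ⊕ A_1 ⊕ ⋯ ⊕ A_{m+n} for all m, n ≥ 0; A is generated as a ring by A_0 together with the finitely many elements x_1, …, x_n; and each A_p is a free left A_0-module of finite rank. -/

import Mathlib

/-- The standard monomial `x^α = x₁^{α₁} ⋯ xₙ^{αₙ}` (ordered product). -/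
def stdMon {A : Type*} [Ring A] {n : ℕ} (x : Fin n → A) (α : Fin n → ℕ) : A :=
  (List.ofFn fun i => x i ^ α i).prod

/-- `A` is a skew PBW extension of `R` (embedded via `φ`) with variables `x₁,…,xₙ`. -/
def IsSkewPBWExt {R A : Type*} [Ring R] [Ring A] {n : ℕ} (φ : R →+* A) (x : Fin n → A) :
    Prop :=
  Function.Injective φ ∧
  (letI : Module R A := Module.compHom A φ;
    LinearIndependent R (stdMon x) ∧
      Submodule.span R (Set.range (stdMon x)) = (⊤ : Submodule R A)) ∧
  (∀ i : Fin n, ∀ r : R, r ≠ 0 → ∃ c : R, c ≠ 0 ∧ ∃ s : R,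
      x i * φ r - φ c * x i = φ s) ∧
  (∀ i j : Fin n, ∃ c : R, c ≠ 0 ∧ ∃ s : R, ∃ t : Fin n → R,
      x j * x i - φ c * (x i * x j) = φ s + ∑ k, φ (t k) * x k)

/-- The homogeneous part `A_p := ⊕_{|α| = p} R·x^α` of a skew PBW extension. -/
def pbwGrade {R A : Type*} [Ring R] [Ring A] {n : ℕ} (φ : R →+* A) (x : Fin n → A)
    (p : ℕ) : AddSubgroup A :=
  AddSubgroup.closure {a | ∃ (r : R) (α : Fin n → ℕ), (∑ i, α i) = p ∧ a = φ r * stdMon x α}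

/-!
Give `A` the left `R`-module structure `r • a = φ r * a`, for which the standard monomials form a
basis. Grouping the basis by total degree gives the decomposition `A = ⊕ₚ Aₚ` with each `Aₚ` free
on the finitely many monomials of degree `p`, and `A₀ = R`. For the multiplicative bound one shows
that the filtration `F_q = ⊕_{p ≤ q} Aₚ` satisfies `xᵢ F_q ⊆ F_{q+1}`, by induction on `q` and then
on `i`: if the first variable `x_j` occurring in `x^α` has `j < i`, the relation
`xᵢ x_j = c x_j xᵢ + (terms of degree ≤ 1)` moves `xᵢ` past `x_j` without raising the degree, and
the skew relation `xᵢ r = c xᵢ + s` lets `xᵢ` pass the coefficients. Hence `F_m F_q ⊆ F_{m+q}`.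
-/

open Finset

theorem AddSubgroup.mul_mem_of_right_mem_closure {A : Type*} [Ring A] {S : Set A}
    {K : AddSubgroup A} {a b : A} (hS : ∀ s ∈ S, a * s ∈ K) (hb : b ∈ closure S) :
    a * b ∈ K :=
  (closure_le (K.comap (AddMonoidHom.mulLeft a))).2 hS hb

theorem AddSubgroup.mul_mem_of_left_mem_closure {A : Type*} [Ring A] {S : Set A}
    {K : AddSubgroup A} {a b : A} (hS : ∀ s ∈ S, s * b ∈ K) (ha : a ∈ closure S) :
    a * b ∈ K :=
  (closure_le (K.comap (AddMonoidHom.mulRight b))).2 hS ha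

theorem LinearIndependent.isInternal_span_image_fiber {R M ι κ : Type*} [Ring R]
    [AddCommGroup M] [Module R M] [DecidableEq κ] {v : ι → M} (hli : LinearIndependent R v)
    (hspan : Submodule.span R (Set.range v) = ⊤) (f : ι → κ) :
    DirectSum.IsInternal fun k => Submodule.span R (v '' (f ⁻¹' {k})) := by
  refine DirectSum.isInternal_submodule_of_iSupIndep_of_iSup_eq_top ?_ ?_
  · refine iSupIndep_def.2 fun k => (hli.disjoint_span_image
      (s := f ⁻¹' {k}) (t := f ⁻¹' {k}ᶜ) (Set.disjoint_left.2 fun _ h1 h2 => h2 h1)).mono_right ?_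
    refine iSup₂_le fun l hl => Submodule.span_mono (Set.image_mono fun i hi => ?_)
    simp only [Set.mem_preimage, Set.mem_singleton_iff, Set.mem_compl_iff] at hi ⊢
    exact hi ▸ hl
  · rw [eq_top_iff, ← hspan, Submodule.span_le]
    rintro _ ⟨i, rfl⟩
    exact Submodule.mem_iSup_of_mem (f i) (Submodule.subset_span ⟨i, rfl, rfl⟩)

theorem LinearIndependent.exists_fin_linearIndependent_range_eq_image {R M ι : Type*} [Ring R]
    [AddCommGroup M] [Module R M] {v : ι → M} (hli : LinearIndependent R v) (s : Finset ι) :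
    ∃ (N : ℕ) (b : Fin N → M), LinearIndependent R b ∧ Set.range b = v '' s := by
  refine ⟨s.card, fun k => v (s.equivFin.symm k), hli.comp _ ?_, ?_⟩
  · exact fun k l hkl => s.equivFin.symm.injective (Subtype.ext hkl)
  · ext m
    constructor
    · rintro ⟨k, rfl⟩
      exact ⟨_, (s.equivFin.symm k).2, rfl⟩
    · rintro ⟨i, hi, rfl⟩
      exact ⟨s.equivFin ⟨i, hi⟩, by simp⟩

theorem sum_add_single_one {n : ℕ} (α : Fin n → ℕ) (i : Fin n) :
    ∑ k, (α + Pi.single i 1 : Fin n → ℕ) k = ∑ k, α k + 1 := by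
  simp [sum_add_distrib]

section StdMon

variable {A : Type*} [Ring A]

@[simp]
theorem stdMon_zero {n : ℕ} (x : Fin n → A) : stdMon x 0 = 1 := by
  simp [stdMon]

theorem stdMon_succ {n : ℕ} (x : Fin (n + 1) → A) (α : Fin (n + 1) → ℕ) :
    stdMon x α = x 0 ^ α 0 * stdMon (x ∘ Fin.succ) (α ∘ Fin.succ) := by
  simp [stdMon, List.ofFn_succ]

theorem x_mul_stdMon {n : ℕ} (x : Fin n → A) (i : Fin n) (α : Fin n → ℕ)
    (hα : ∀ j < i, α j = 0) : x i * stdMon x α = stdMon x (α + Pi.single i 1) := by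
  induction n with
  | zero => exact i.elim0
  | succ n ih =>
    induction i using Fin.cases with
    | zero =>
      rw [stdMon_succ, stdMon_succ, ← mul_assoc, ← pow_succ']
      congr 2
    | succ i =>
      have hα0 : α 0 = 0 := hα 0 i.succ_pos
      have hsucc : (α + Pi.single i.succ 1) ∘ Fin.succ = α ∘ Fin.succ + Pi.single i 1 := by
        ext j
        simp [Pi.single_apply]
      rw [stdMon_succ, stdMon_succ, hsucc,
        ← ih (x ∘ Fin.succ) i (α ∘ Fin.succ) fun j hj => hα j.succ (Fin.succ_lt_succ_iff.2 hj)]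
      simp [hα0, (Fin.succ_ne_zero i).symm]

theorem exists_stdMon_eq_mul_stdMon {n : ℕ} (x : Fin n → A) {α : Fin n → ℕ} (hα : α ≠ 0) :
    ∃ (j : Fin n) (α' : Fin n → ℕ), stdMon x α = x j * stdMon x α' ∧
      ∑ k, α' k + 1 = ∑ k, α k ∧ ∀ k, α k ≠ 0 → j ≤ k := by
  obtain ⟨j, hj, hmin⟩ := wellFounded_lt.has_min {k | α k ≠ 0} (Function.ne_iff.1 hα)
  have hmin' : ∀ k, α k ≠ 0 → j ≤ k := fun k hk => not_lt.1 (hmin k hk)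
  have hj : α j ≠ 0 := hj
  have hsplit : α - Pi.single j 1 + Pi.single j 1 = α := by
    ext k
    by_cases hk : k = j
    · subst hk
      simp only [Pi.add_apply, Pi.sub_apply, Pi.single_eq_same]
      omega
    · simp [hk]
  refine ⟨j, α - Pi.single j 1, ?_, ?_, hmin'⟩
  · rw [x_mul_stdMon, hsplit]
    intro k hk
    have : α k = 0 := by_contra fun h => absurd (hmin' k h) (not_le.2 hk)
    simp [this]
  · rw [← sum_add_single_one, hsplit]

end StdMon

section Filtration

variable {R A : Type*} [Ring R] [Ring A] {n : ℕ} (φ : R →+* A) (x : Fin n → A)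

def pbwFiltration (q : ℕ) : AddSubgroup A :=
  AddSubgroup.closure {a | ∃ (r : R) (α : Fin n → ℕ), ∑ i, α i ≤ q ∧ a = φ r * stdMon x α}

theorem mul_stdMon_mem_pbwFiltration (r : R) {α : Fin n → ℕ} {q : ℕ} (h : ∑ i, α i ≤ q) :
    φ r * stdMon x α ∈ pbwFiltration φ x q :=
  AddSubgroup.subset_closure ⟨r, α, h, rfl⟩

theorem stdMon_mem_pbwFiltration {α : Fin n → ℕ} {q : ℕ} (h : ∑ i, α i ≤ q) :
    stdMon x α ∈ pbwFiltration φ x q := by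
  simpa using mul_stdMon_mem_pbwFiltration φ x 1 h

theorem pbwFiltration_mono {q q' : ℕ} (h : q ≤ q') : pbwFiltration φ x q ≤ pbwFiltration φ x q' :=
  AddSubgroup.closure_mono fun _ ⟨r, α, hα, ha⟩ => ⟨r, α, hα.trans h, ha⟩

theorem phi_mul_mem_pbwFiltration (r : R) {q : ℕ} {b : A} (hb : b ∈ pbwFiltration φ x q) :
    φ r * b ∈ pbwFiltration φ x q := by
  refine AddSubgroup.mul_mem_of_right_mem_closure ?_ hb
  rintro _ ⟨r', α, hα, rfl⟩
  rw [← mul_assoc, ← map_mul]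
  exact mul_stdMon_mem_pbwFiltration φ x _ hα

theorem phi_mul_mem_pbwGrade (r : R) {p : ℕ} {b : A} (hb : b ∈ pbwGrade φ x p) :
    φ r * b ∈ pbwGrade φ x p := by
  refine AddSubgroup.mul_mem_of_right_mem_closure ?_ hb
  rintro _ ⟨r', α, hα, rfl⟩
  rw [← mul_assoc, ← map_mul]
  exact AddSubgroup.subset_closure ⟨_, α, hα, rfl⟩

theorem pbwGrade_le_pbwFiltration {p q : ℕ} (h : p ≤ q) : pbwGrade φ x p ≤ pbwFiltration φ x q :=
  AddSubgroup.closure_mono fun _ ⟨r, α, hα, ha⟩ => ⟨r, α, hα.trans_le h, ha⟩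

theorem pbwFiltration_eq_iSup_pbwGrade (q : ℕ) :
    pbwFiltration φ x q = ⨆ p ∈ Iic q, pbwGrade φ x p := by
  refine le_antisymm ((AddSubgroup.closure_le _).2 ?_)
    (iSup₂_le fun p hp => pbwGrade_le_pbwFiltration φ x (mem_Iic.1 hp))
  rintro _ ⟨r, α, hα, rfl⟩
  exact (le_iSup₂ (f := fun p (_ : p ∈ Iic q) => pbwGrade φ x p) _ (mem_Iic.2 hα))
    (AddSubgroup.subset_closure ⟨r, α, rfl, rfl⟩)

theorem coe_pbwGrade_zero : (pbwGrade φ x 0 : Set A) = Set.range φ := by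
  have hgen : {a | ∃ (r : R) (α : Fin n → ℕ), ∑ i, α i = 0 ∧ a = φ r * stdMon x α} =
      ((φ : R →+ A).range : Set A) := by
    ext a
    simp only [Set.mem_ofPred_eq, AddMonoidHom.coe_range, Set.mem_range, sum_eq_zero_iff,
      mem_univ, true_implies]
    constructor
    · rintro ⟨r, α, hα, rfl⟩
      exact ⟨r, by simp [show α = 0 from funext hα]⟩
    · rintro ⟨r, rfl⟩
      exact ⟨r, 0, fun _ => rfl, by simp⟩
  rw [pbwGrade, hgen, AddSubgroup.closure_eq, AddMonoidHom.coe_range]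
  rfl

end Filtration

structure SkewPBWRelations {R A : Type*} [Ring R] [Ring A] {n : ℕ} (φ : R →+* A)
    (x : Fin n → A) : Prop where
  mul_phi : ∀ (i : Fin n) (r : R), ∃ c s : R, x i * φ r = φ c * x i + φ s
  mul_x : ∀ i j : Fin n, ∃ (c s : R) (t : Fin n → R),
    x i * x j = φ c * (x j * x i) + (φ s + ∑ k, φ (t k) * x k)

theorem IsSkewPBWExt.skewPBWRelations {R A : Type*} [Ring R] [Ring A] {n : ℕ} {φ : R →+* A}
    {x : Fin n → A} (h : IsSkewPBWExt φ x) : SkewPBWRelations φ x where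
  mul_phi i r := by
    by_cases hr : r = 0
    · exact ⟨0, 0, by simp [hr]⟩
    · obtain ⟨c, -, s, hcs⟩ := h.2.2.1 i r hr
      exact ⟨c, s, by rw [← hcs]; abel⟩
  mul_x i j := by
    obtain ⟨c, -, s, t, hrel⟩ := h.2.2.2 j i
    exact ⟨c, s, t, by rw [← hrel]; abel⟩

namespace SkewPBWRelations

variable {R A : Type*} [Ring R] [Ring A] {n : ℕ} {φ : R →+* A} {x : Fin n → A}

theorem x_mul_mem_pbwFiltration_of_forall_stdMon (hx : SkewPBWRelations φ x) {i : Fin n}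
    {q : ℕ} (hmon : ∀ α : Fin n → ℕ, ∑ k, α k ≤ q → x i * stdMon x α ∈ pbwFiltration φ x (q + 1))
    {b : A} (hb : b ∈ pbwFiltration φ x q) : x i * b ∈ pbwFiltration φ x (q + 1) := by
  refine AddSubgroup.mul_mem_of_right_mem_closure ?_ hb
  rintro _ ⟨r, α, hα, rfl⟩
  obtain ⟨c, s, hcs⟩ := hx.mul_phi i r
  rw [← mul_assoc, hcs, add_mul, mul_assoc]
  exact add_mem (phi_mul_mem_pbwFiltration φ x c (hmon α hα))
    (mul_stdMon_mem_pbwFiltration φ x s (hα.trans q.le_succ))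

theorem x_mul_stdMon_mem_pbwFiltration (hx : SkewPBWRelations φ x) (q : ℕ) (i : Fin n)
    (α : Fin n → ℕ) (hα : ∑ k, α k ≤ q) : x i * stdMon x α ∈ pbwFiltration φ x (q + 1) := by
  induction q generalizing i α with
  | zero =>
    obtain rfl : α = 0 := funext (by simpa using hα)
    rw [x_mul_stdMon x i 0 fun _ _ => rfl]
    exact stdMon_mem_pbwFiltration φ x (by simp)
  | succ q ih =>
    induction i using WellFoundedLT.induction generalizing α with
    | _ i ihi =>
    by_cases hlow : ∀ j < i, α j = 0
    · rw [x_mul_stdMon x i α hlow]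
      exact stdMon_mem_pbwFiltration φ x (by rw [sum_add_single_one]; omega)
    push Not at hlow
    obtain ⟨k, hki, hk⟩ := hlow
    obtain ⟨j, α', hfac, hdeg, hjmin⟩ := exists_stdMon_eq_mul_stdMon x (Function.ne_iff.2 ⟨k, hk⟩)
    have hji : j < i := (hjmin k hk).trans_lt hki
    obtain ⟨c, s, t, hij⟩ := hx.mul_x i j
    have hα' : ∑ l, α' l ≤ q := by omega
    have hexp : x i * stdMon x α = φ c * (x j * (x i * stdMon x α')) +
        (φ s * stdMon x α' + ∑ l, φ (t l) * (x l * stdMon x α')) := by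
      rw [hfac, ← mul_assoc, hij]
      simp only [add_mul, sum_mul, mul_assoc]
    rw [hexp]
    refine add_mem (phi_mul_mem_pbwFiltration φ x c ?_) (add_mem ?_ (sum_mem fun l _ => ?_))
    · exact hx.x_mul_mem_pbwFiltration_of_forall_stdMon (ihi j hji) (ih i α' hα')
    · exact mul_stdMon_mem_pbwFiltration φ x s (by omega)
    · exact phi_mul_mem_pbwFiltration φ x _ (pbwFiltration_mono φ x q.succ.le_succ (ih l α' hα'))

theorem x_mul_mem_pbwFiltration (hx : SkewPBWRelations φ x) (i : Fin n) {q : ℕ} {b : A}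
    (hb : b ∈ pbwFiltration φ x q) : x i * b ∈ pbwFiltration φ x (q + 1) :=
  hx.x_mul_mem_pbwFiltration_of_forall_stdMon (hx.x_mul_stdMon_mem_pbwFiltration q i) hb

theorem stdMon_mul_mem_pbwFiltration (hx : SkewPBWRelations φ x) (α : Fin n → ℕ) {q : ℕ}
    {b : A} (hb : b ∈ pbwFiltration φ x q) :
    stdMon x α * b ∈ pbwFiltration φ x (q + ∑ k, α k) := by
  induction hd : ∑ k, α k generalizing α with
  | zero =>
    obtain rfl : α = 0 := funext fun k => by simpa using sum_eq_zero_iff.1 hd k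
    simpa using hb
  | succ d ih =>
    have hα : α ≠ 0 := by rintro rfl; simp at hd
    obtain ⟨j, α', hfac, hdeg, -⟩ := exists_stdMon_eq_mul_stdMon x hα
    rw [hfac, mul_assoc]
    exact hx.x_mul_mem_pbwFiltration j (ih α' (by omega))

theorem mul_mem_pbwFiltration (hx : SkewPBWRelations φ x) {m q : ℕ} {a b : A}
    (ha : a ∈ pbwFiltration φ x m) (hb : b ∈ pbwFiltration φ x q) :
    a * b ∈ pbwFiltration φ x (m + q) := by
  refine AddSubgroup.mul_mem_of_left_mem_closure ?_ ha
  rintro _ ⟨r, α, hα, rfl⟩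
  rw [mul_assoc]
  exact phi_mul_mem_pbwFiltration φ x r (pbwFiltration_mono φ x (by omega)
    (hx.stdMon_mul_mem_pbwFiltration α hb))

theorem mul_mem_iSup_pbwGrade (hx : SkewPBWRelations φ x) (m p : ℕ) (a : A)
    (ha : a ∈ pbwGrade φ x m) (b : A) (hb : b ∈ pbwGrade φ x p) :
    a * b ∈ ⨆ i ∈ Iic (m + p), pbwGrade φ x i := by
  rw [← pbwFiltration_eq_iSup_pbwGrade]
  exact hx.mul_mem_pbwFiltration (pbwGrade_le_pbwFiltration φ x le_rfl ha)
    (pbwGrade_le_pbwFiltration φ x le_rfl hb)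

end SkewPBWRelations

section Module

variable {R A : Type*} [Ring R] [Ring A] [Module R A] {n : ℕ} (φ : R →+* A) (x : Fin n → A)

theorem pbwGrade_eq_span (hsm : ∀ (r : R) (a : A), r • a = φ r * a) (p : ℕ) :
    pbwGrade φ x p = (Submodule.span R (stdMon x '' {α | ∑ i, α i = p})).toAddSubgroup := by
  refine le_antisymm ((AddSubgroup.closure_le _).2 ?_) fun a ha => ?_
  · rintro _ ⟨r, α, hα, rfl⟩
    rw [← hsm]
    exact Submodule.smul_mem _ r (Submodule.subset_span ⟨α, hα, rfl⟩)
  · refine Submodule.span_induction ?_ (zero_mem _) (fun _ _ _ _ => add_mem) ?_ ha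
    · rintro _ ⟨α, hα, rfl⟩
      exact AddSubgroup.subset_closure ⟨1, α, hα, by simp⟩
    · intro r a _ hmem
      rw [hsm]
      exact phi_mul_mem_pbwGrade φ x r hmem

theorem subring_closure_range_union_range_eq_top (hsm : ∀ (r : R) (a : A), r • a = φ r * a)
    (hspan : Submodule.span R (Set.range (stdMon x)) = ⊤) :
    Subring.closure (Set.range φ ∪ Set.range x) = ⊤ := by
  rw [eq_top_iff]
  rintro a -
  have ha : a ∈ Submodule.span R (Set.range (stdMon x)) := hspan ▸ Submodule.mem_top
  induction ha using Submodule.span_induction with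
  | zero => exact zero_mem _
  | add _ _ _ _ hb hc => exact add_mem hb hc
  | mem _ hb =>
    obtain ⟨α, rfl⟩ := hb
    refine Subring.list_prod_mem _ fun b hb => ?_
    obtain ⟨i, rfl⟩ := List.mem_ofFn.1 hb
    exact pow_mem (Subring.subset_closure (Set.mem_union_right _ (Set.mem_range_self i))) _
  | smul r b _ hb =>
    rw [hsm]
    exact mul_mem (Subring.subset_closure (Set.mem_union_left _ ⟨r, rfl⟩)) hb

theorem exists_pbwGrade_basis (hsm : ∀ (r : R) (a : A), r • a = φ r * a)
    (hli : LinearIndependent R (stdMon x)) (p : ℕ) :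
    ∃ (N : ℕ) (b : Fin N → A), (∀ k, b k ∈ pbwGrade φ x p) ∧
      Function.Injective (fun t : Fin N → R => ∑ k, φ (t k) * b k) ∧
      ∀ a ∈ pbwGrade φ x p, ∃ t : Fin N → R, a = ∑ k, φ (t k) * b k := by
  obtain ⟨N, b, hb, hrange⟩ :=
    hli.exists_fin_linearIndependent_range_eq_image (Nat.antidiagonalTuple n p)
  have hrange' : Set.range b = stdMon x '' {α | ∑ i, α i = p} := by
    rw [hrange]
    congr 1
    ext α
    exact Nat.mem_antidiagonalTuple
  have hcomb : (fun t : Fin N → R => ∑ k, φ (t k) * b k) = Fintype.linearCombination R b := by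
    ext t
    simp [Fintype.linearCombination_apply, hsm]
  refine ⟨N, b, fun k => ?_, ?_, fun a ha => ?_⟩
  · rw [pbwGrade_eq_span φ x hsm, ← hrange']
    exact Submodule.subset_span ⟨k, rfl⟩
  · exact hcomb ▸ linearIndependent_iff_injective_fintypeLinearCombination.1 hb
  · rw [pbwGrade_eq_span φ x hsm, ← hrange'] at ha
    obtain ⟨t, rfl⟩ := (Submodule.mem_span_range_iff_exists_fun R).1 ha
    exact ⟨t, by simp [hsm]⟩

end Module

/-- Theorem: every skew PBW extension is a finitely semi-graded ring, with semi-graduation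
`A_p = ⊕_{|α| = p} R x^α`. -/
theorem stmt4 {R A : Type*} [Ring R] [Ring A] {n : ℕ} (φ : R →+* A) (x : Fin n → A)
    (h : IsSkewPBWExt φ x) :
    -- A = ⊕_{p ≥ 0} A_p internally
    DirectSum.IsInternal (pbwGrade φ x) ∧
    -- 1 ∈ A_0 = R
    (1 : A) ∈ pbwGrade φ x 0 ∧
    (pbwGrade φ x 0 : Set A) = Set.range φ ∧
    -- A_m · A_p ⊆ A_0 ⊕ ⋯ ⊕ A_{m+p}
    (∀ m p : ℕ, ∀ a ∈ pbwGrade φ x m, ∀ b ∈ pbwGrade φ x p,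
        a * b ∈ ⨆ i ∈ Finset.Iic (m + p), pbwGrade φ x i) ∧
    -- A is generated as a ring by A_0 and x₁,…,xₙ
    Subring.closure ((pbwGrade φ x 0 : Set A) ∪ Set.range x) = (⊤ : Subring A) ∧
    -- each A_p is a free left A_0 = R module of finite rank
    (∀ p : ℕ, ∃ (N : ℕ) (b : Fin N → A),
        (∀ k, b k ∈ pbwGrade φ x p) ∧
        Function.Injective (fun t : Fin N → R => ∑ k, φ (t k) * b k) ∧
        ∀ a ∈ pbwGrade φ x p, ∃ t : Fin N → R, a = ∑ k, φ (t k) * b k) := by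
  let : Module R A := Module.compHom A φ
  have hsm : ∀ (r : R) (a : A), r • a = φ r * a := fun _ _ => rfl
  have hx := h.skewPBWRelations
  obtain ⟨-, ⟨hli, hspan⟩, -⟩ := h
  have hzero := coe_pbwGrade_zero φ x
  refine ⟨?_, ?_, hzero, hx.mul_mem_iSup_pbwGrade, ?_, exists_pbwGrade_basis φ x hsm hli⟩
  · rw [funext (pbwGrade_eq_span φ x hsm)]
    exact hli.isInternal_span_image_fiber hspan _
  · rw [← SetLike.mem_coe, hzero]
    exact ⟨1, map_one φ⟩
  · rw [hzero]
    exact subring_closure_range_union_range_eq_top φ x hsm hspan
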